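/- The complete bipartite graph K_{2,6} is B_1-EPG_t: there exists a family of paths on the triangular grid, each with at most one bend, whose edge-intersection graph is K_{2,6}. -/

import Mathlib

/-- The triangular grid: the simple graph on `ℤ × ℤ` where two points are adjacent
iff their difference is `±(1,0)`, `±(0,1)` or `±(1,1)`. -/
def TGrid : SimpleGraph (ℤ × ℤ) where
  Adj u v :=
    (v.1 - u.1 = 1 ∧ v.2 - u.2 = 0) ∨ (v.1 - u.1 = -1 ∧ v.2 - u.2 = 0) ∨
    (v.1 - u.1 = 0 ∧ v.2 - u.2 = 1) ∨ (v.1 - u.1 = 0 ∧ v.2 - u.2 = -1) ∨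
    (v.1 - u.1 = 1 ∧ v.2 - u.2 = 1) ∨ (v.1 - u.1 = -1 ∧ v.2 - u.2 = -1)
  symm := ⟨by intro u v h; omega⟩
  loopless := ⟨by intro u h; omega⟩

/-- The (symmetric) direction datum of a grid edge: the pair of absolute coordinate
differences.  For grid edges this is `(1,0)` (horizontal), `(0,1)` (vertical) or
`(1,1)` (diagonal). -/
def edir (e : Sym2 (ℤ × ℤ)) : ℤ × ℤ :=
  Sym2.lift ⟨fun u v => (|u.1 - v.1|, |u.2 - v.2|), by
    intro u v; simp [abs_sub_comm]⟩ e

/-- The `t`-th edge of a walk. -/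
def wEdge {u v : ℤ × ℤ} (p : TGrid.Walk u v) (t : ℕ) : Sym2 (ℤ × ℤ) :=
  s(p.getVert t, p.getVert (t + 1))

/-- The number of bends of a walk: the number of consecutive pairs of edges with
different directions. -/
def bendCount {u v : ℤ × ℤ} (p : TGrid.Walk u v) : ℕ :=
  (List.range (p.length - 1)).countP
    (fun i => decide (edir (wEdge p i) ≠ edir (wEdge p (i + 1))))

/-- `b` is a bend point of the walk `p`. -/
def IsBendAt {u v : ℤ × ℤ} (p : TGrid.Walk u v) (b : ℤ × ℤ) : Prop :=
  ∃ i : ℕ, i + 2 ≤ p.length ∧ p.getVert (i + 1) = b ∧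
    edir (wEdge p i) ≠ edir (wEdge p (i + 1))

/-- A (nontrivial simple) path on the triangular grid. -/
structure TPath where
  src : ℤ × ℤ
  dst : ℤ × ℤ
  walk : TGrid.Walk src dst
  isPath : walk.IsPath
  nontriv : 0 < walk.length

/-- The set of grid edges of a path. -/
def pEdges (P : TPath) : Set (Sym2 (ℤ × ℤ)) := {e | e ∈ P.walk.edges}

/-- The set of grid points of a path. -/
def pPts (P : TPath) : Set (ℤ × ℤ) := {q | q ∈ P.walk.support}

/-- A segment of a path: a maximal straight (bend-free) subpath, recorded by the
interval of edge indices `[i, j)` it occupies. -/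
structure Segment (P : TPath) where
  i : ℕ
  j : ℕ
  lt : i < j
  le : j ≤ P.walk.length
  straight : ∀ t, i ≤ t → t < j → edir (wEdge P.walk t) = edir (wEdge P.walk i)
  maxLeft : i = 0 ∨ edir (wEdge P.walk (i - 1)) ≠ edir (wEdge P.walk i)
  maxRight : j = P.walk.length ∨ edir (wEdge P.walk (j - 1)) ≠ edir (wEdge P.walk j)

/-- The set of grid edges of a segment. -/
def Segment.edges {P : TPath} (s : Segment P) : Set (Sym2 (ℤ × ℤ)) :=
  {e | ∃ t, s.i ≤ t ∧ t < s.j ∧ e = wEdge P.walk t}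

/-- The set of grid points of a segment. -/
def Segment.pts {P : TPath} (s : Segment P) : Set (ℤ × ℤ) :=
  {q | ∃ t, s.i ≤ t ∧ t ≤ s.j ∧ q = P.walk.getVert t}

/-- The direction of a segment. -/
def Segment.dir {P : TPath} (s : Segment P) : ℤ × ℤ := edir (wEdge P.walk s.i)

/-- The three directions of the triangular grid. -/
inductive Dir | H | V | D
deriving DecidableEq

/-- The direction of the (straight) line from `a` to `b`. -/
def dirOf (a b : ℤ × ℤ) : Dir :=
  if a.2 = b.2 then .H else if a.1 = b.1 then .V else .D

/-- A grid line of the triangular grid: a full horizontal, vertical or diagonal line. -/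
structure GridLine where
  dir : Dir
  c : ℤ

/-- The parametrization of the points of a grid line. -/
def GridLine.pt (l : GridLine) (t : ℤ) : ℤ × ℤ :=
  match l.dir with
  | .H => (t, l.c)
  | .V => (l.c, t)
  | .D => (l.c + t, t)

/-- The `t`-th edge of a grid line. -/
def GridLine.edge (l : GridLine) (t : ℤ) : Sym2 (ℤ × ℤ) := s(l.pt t, l.pt (t + 1))

/-- The set of grid points of a grid line. -/
def GridLine.pts (l : GridLine) : Set (ℤ × ℤ) := Set.range l.pt

/-- The set of grid edges of a grid line. -/
def GridLine.edges (l : GridLine) : Set (Sym2 (ℤ × ℤ)) := Set.range l.edge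

/-- A right triangle of the triangular grid, given by a base corner `p`, a leg
length `k ≥ 1`, and one of the two possible orientations. -/
structure RightTri where
  p : ℤ × ℤ
  k : ℤ
  hk : 1 ≤ k
  orientA : Bool

/-- The set of grid edges of a right triangle. -/
def RightTri.edges (T : RightTri) : Set (Sym2 (ℤ × ℤ)) :=
  if T.orientA then
    {e | ∃ t : ℤ, 0 ≤ t ∧ t < T.k ∧
      (e = s((T.p.1 + t, T.p.2), (T.p.1 + t + 1, T.p.2)) ∨
       e = s((T.p.1 + T.k, T.p.2 + t), (T.p.1 + T.k, T.p.2 + t + 1)) ∨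
       e = s((T.p.1 + t, T.p.2 + t), (T.p.1 + t + 1, T.p.2 + t + 1)))}
  else
    {e | ∃ t : ℤ, 0 ≤ t ∧ t < T.k ∧
      (e = s((T.p.1, T.p.2 + t), (T.p.1, T.p.2 + t + 1)) ∨
       e = s((T.p.1 + t, T.p.2 + T.k), (T.p.1 + t + 1, T.p.2 + T.k)) ∨
       e = s((T.p.1 + t, T.p.2 + t), (T.p.1 + t + 1, T.p.2 + t + 1)))}

/-- The three corners of a right triangle. -/
def RightTri.corners (T : RightTri) : Set (ℤ × ℤ) :=
  if T.orientA then {T.p, (T.p.1 + T.k, T.p.2), (T.p.1 + T.k, T.p.2 + T.k)}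
  else {T.p, (T.p.1, T.p.2 + T.k), (T.p.1 + T.k, T.p.2 + T.k)}

/-- `U(𝒫)`: the subgraph of the grid formed by all segments of members of the family
that share at least one grid edge with another member, given by its set of edges. -/
def UEdges {ι : Type} (P : ι → TPath) : Set (Sym2 (ℤ × ℤ)) :=
  {e | ∃ i : ι, ∃ s : Segment (P i), e ∈ s.edges ∧
        ∃ j : ι, j ≠ i ∧ (s.edges ∩ pEdges (P j)).Nonempty}

/-- A B₁-EPGₜ representation of a simple graph `G`: a family of at most-one-bend
paths on the triangular grid whose edge-intersection graph is `G`. -/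
def IsB1EPGtRep {V : Type} (G : SimpleGraph V) (Rep : V → TPath) : Prop :=
  (∀ v, bendCount (Rep v).walk ≤ 1) ∧
  ∀ u v : V, u ≠ v → (G.Adj u v ↔ (pEdges (Rep u) ∩ pEdges (Rep v)).Nonempty)

/-! The two paths of the small side are long one-bend paths, `hostH` (horizontal, then
diagonal) and `hostV` (vertical, then diagonal), with no common edge; their lines cross at
three grid points, `(0,0)`, `(-2,0)` and `(0,-2)`. At each crossing point `q`, each host has
two edges at `q`, and the four edges split into two disjoint pairs (one edge of each host).
Each pair is a two-edge path that bends at `q`, since the hosts run in different directions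
there. These six corners share an edge with both hosts and no edge with each other. -/

instance : DecidableRel TGrid.Adj := fun _ _ => inferInstanceAs (Decidable (_ ∨ _ ∨ _ ∨ _ ∨ _ ∨ _))

instance (P Q : TPath) : Decidable (pEdges P ∩ pEdges Q).Nonempty :=
  decidable_of_iff (∃ e ∈ P.walk.edges, e ∈ Q.walk.edges) Iff.rfl

def TPath.ofWalk {u v : ℤ × ℤ} (p : TGrid.Walk u v) (hp : p.support.Nodup := by decide)
    (hn : 0 < p.length := by decide) : TPath :=
  ⟨u, v, p, p.isPath_def.2 hp, hn⟩

def cornerWalk (a q b : ℤ × ℤ) (ha : TGrid.Adj a q := by decide)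
    (hb : TGrid.Adj q b := by decide) : TGrid.Walk a b :=
  .cons ha (.cons hb .nil)

def hostH : TGrid.Walk (-3, 0) (-1, -3) :=
  .cons (v := (-2, 0)) (by decide) <| .cons (v := (-1, 0)) (by decide) <|
  .cons (v := (0, 0)) (by decide) <| .cons (v := (1, 0)) (by decide) <|
  .cons (v := (2, 0)) (by decide) <| .cons (v := (1, -1)) (by decide) <|
  .cons (v := (0, -2)) (by decide) <| .cons (by decide) .nil

def hostV : TGrid.Walk (0, -3) (-3, -1) :=
  .cons (v := (0, -2)) (by decide) <| .cons (v := (0, -1)) (by decide) <|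
  .cons (v := (0, 0)) (by decide) <| .cons (v := (0, 1)) (by decide) <|
  .cons (v := (0, 2)) (by decide) <| .cons (v := (-1, 1)) (by decide) <|
  .cons (v := (-2, 0)) (by decide) <| .cons (by decide) .nil

def host : Fin 2 → TPath := ![.ofWalk hostH, .ofWalk hostV]

def guest : Fin 6 → TPath :=
  ![.ofWalk (cornerWalk (-1, 0) (0, 0) (0, 1)), .ofWalk (cornerWalk (1, 0) (0, 0) (0, -1)),
    .ofWalk (cornerWalk (-3, 0) (-2, 0) (-1, 1)), .ofWalk (cornerWalk (-1, 0) (-2, 0) (-3, -1)),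
    .ofWalk (cornerWalk (1, -1) (0, -2) (0, -3)), .ofWalk (cornerWalk (-1, -3) (0, -2) (0, -1))]

theorem host_edges_disjoint :
    ∀ i j : Fin 2, i ≠ j → ¬ (pEdges (host i) ∩ pEdges (host j)).Nonempty := by
  decide

theorem guest_edges_disjoint :
    ∀ i j : Fin 6, i ≠ j → ¬ (pEdges (guest i) ∩ pEdges (guest j)).Nonempty := by
  decide

theorem host_inter_guest_nonempty :
    ∀ i j, (pEdges (host i) ∩ pEdges (guest j)).Nonempty := by
  decide

/-- The complete bipartite graph `K_{2,6}` is B₁-EPGₜ. -/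
theorem stmt15 :
    ∃ Rep : (Fin 2 ⊕ Fin 6) → TPath,
      IsB1EPGtRep (completeBipartiteGraph (Fin 2) (Fin 6)) Rep := by
  refine ⟨Sum.elim host guest, by decide, ?_⟩
  rintro (i | i) (j | j) hij
  · simpa using host_edges_disjoint i j (by simpa using hij)
  · simpa using host_inter_guest_nonempty i j
  · simpa [Set.inter_comm] using host_inter_guest_nonempty j i
  · simpa using guest_edges_disjoint i j (by simpa using hij)
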